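/- arXiv:1608.06793 — 2 statements merged into one kernel-verified Lean document; each statement's English description precedes it below -/
import Mathlib

section
/- Let L be a finite-dimensional solvable Lie algebra. The length of the upper nilpotent series of L equals the length of the lower nilpotent series of L; that is, if r is minimal with N_r(L)=L and s is minimal with Γ_s(L)=0, then r = s. -/
/-- The canonical quotient map `L → L ⧸ I` as a morphism of Lie algebras. -/
def lieQuotMk {F L : Type*} [Field F] [LieRing L] [LieAlgebra F L] (I : LieIdeal F L) :
    L →ₗ⁅F⁆ L ⧸ I where
  toLinearMap := (LieSubmodule.Quotient.mk' I).toLinearMap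
  map_lie' := rfl

variable (F : Type*) [Field F]

/-- The nilradical: the largest nilpotent ideal of a (finite-dimensional) Lie algebra. -/
noncomputable def nilrad (L : Type*) [LieRing L] [LieAlgebra F L] : LieIdeal F L :=
  sSup {I : LieIdeal F L | LieRing.IsNilpotent I}

/-- The upper nilpotent series: `N 0 = 0`, `N (i+1) / N i = nilradical of L ⧸ N i`. -/
noncomputable def upperNil (L : Type*) [LieRing L] [LieAlgebra F L] : ℕ → LieIdeal F L
  | 0 => ⊥
  | n + 1 => LieIdeal.comap (lieQuotMk (upperNil L n)) (nilrad F (L ⧸ upperNil L n))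

/-- The nilpotent length: the least `n` with `N n = L`. -/
noncomputable def nilLen (L : Type*) [LieRing L] [LieAlgebra F L] : ℕ :=
  sInf {n : ℕ | upperNil F L n = ⊤}

/-- The nilpotent residual `γ∞(L)`: the smallest ideal with nilpotent quotient. -/
noncomputable def nilResidual (L : Type*) [LieRing L] [LieAlgebra F L] : LieIdeal F L :=
  sInf {I : LieIdeal F L | LieRing.IsNilpotent (L ⧸ I)}

/-- The lower nilpotent series: `Γ 0 = L`, `Γ (i+1) = γ∞(Γ i)`, viewed as subalgebras of `L`. -/
noncomputable def lowerNil (L : Type*) [LieRing L] [LieAlgebra F L] : ℕ → LieSubalgebra F L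
  | 0 => ⊤
  | n + 1 =>
      LieSubalgebra.map (lowerNil L n).incl
        (LieIdeal.toLieSubalgebra F (lowerNil L n) (nilResidual F (lowerNil L n)))

/-- `M` is a maximal (proper) subalgebra of `L`. -/
def IsMaxSub {L : Type*} [LieRing L] [LieAlgebra F L] (M : LieSubalgebra F L) : Prop :=
  M ≠ ⊤ ∧ ∀ K : LieSubalgebra F L, M < K → K = ⊤

/-- The Frattini subalgebra: the intersection of all maximal subalgebras. -/
noncomputable def lieFrattini (L : Type*) [LieRing L] [LieAlgebra F L] : LieSubalgebra F L :=
  sInf {M : LieSubalgebra F L | IsMaxSub F M}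

/-- The core of a subalgebra `U`: the largest ideal of `L` contained in `U`. -/
noncomputable def lieCore {L : Type*} [LieRing L] [LieAlgebra F L] (U : LieSubalgebra F L) :
    LieIdeal F L :=
  sSup {I : LieIdeal F L | (I : Set L) ⊆ (U : Set L)}

/-- `A` is a minimal ideal of `L`. -/
def IsMinIdeal {L : Type*} [LieRing L] [LieAlgebra F L] (A : LieIdeal F L) : Prop :=
  A ≠ ⊥ ∧ ∀ B : LieIdeal F L, B < A → B = ⊥

/-- The Frattini series: `φ i (L) / N (i-1) (L) = φ(L ⧸ N (i-1) (L))` for `i ≥ 1`. -/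
noncomputable def fratSeries (L : Type*) [LieRing L] [LieAlgebra F L] (i : ℕ) :
    LieSubalgebra F L :=
  LieSubalgebra.comap (lieQuotMk (upperNil F L (i - 1)))
    (lieFrattini F (L ⧸ upperNil F L (i - 1)))

/-- `L` is extreme: `N i (L) / φ i (L)` is a chief factor of `L` for each `1 ≤ i ≤ n(L)`. -/
def IsExtremeLie (L : Type*) [LieRing L] [LieAlgebra F L] : Prop :=
  ∀ i, 1 ≤ i → i ≤ nilLen F L →
    (fratSeries F L i : Set L) ⊆ (upperNil F L i : Set L) ∧
    (fratSeries F L i : Set L) ≠ (upperNil F L i : Set L) ∧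
    ∀ C : LieIdeal F L, (fratSeries F L i : Set L) ⊆ (C : Set L) → C ≤ upperNil F L i →
      (C : Set L) = (fratSeries F L i : Set L) ∨ C = upperNil F L i

/-- `L` is supersolvable: it has a chain of ideals with one-dimensional quotients. -/
def IsSupersolvable (L : Type*) [LieRing L] [LieAlgebra F L] : Prop :=
  ∃ (n : ℕ) (C : ℕ → LieIdeal F L), C 0 = ⊥ ∧ C n = ⊤ ∧
    ∀ i < n, C i ≤ C (i + 1) ∧
      Module.finrank F (C (i + 1)) = Module.finrank F (C i) + 1

/-- A minimal ideal `A` is complemented if some maximal subalgebra `M` satisfies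
`L = A + M` and `A ∩ M = 0`. -/
def IsComplementedIdeal {L : Type*} [LieRing L] [LieAlgebra F L] (A : LieIdeal F L) : Prop :=
  ∃ M : LieSubalgebra F L, IsMaxSub F M ∧
    A.toSubmodule ⊔ M.toSubmodule = ⊤ ∧ A.toSubmodule ⊓ M.toSubmodule = ⊥

/-!
The two series are compared through the equivalence `Γ (n+1) ⊆ N j ↔ Γ n ⊆ N (j+1)`. Every
`Γ n` is an ideal of `L`, so its image in `L ⧸ N j` is an ideal; that image lies in the
nilradical exactly when it is nilpotent, i.e. exactly when `γ∞(Γ n) = Γ (n+1)` lies in `N j`.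
Iterating gives `Γ n = 0 ↔ N n = L` for every `n`.

That the nilradical is itself nilpotent comes from `(I + J)^(a+b) ⊆ I^a + J^b`, for the powers
`I^(k+1) = ⁅I, I^k⁆` taken inside `L`, which are ideals of `L`.
-/

open LieModule

namespace LieIdeal

variable {R L : Type*} [CommRing R] [LieRing L] [LieAlgebra R L] (I J : LieIdeal R L)

theorem lcs_succ_le_self (k : ℕ) : I.lcs L (k + 1) ≤ I := by
  rw [lcs_succ]
  exact LieSubmodule.lie_le_left _ _

theorem lowerCentralSeries_le_comap_lcs (k : ℕ) :
    lowerCentralSeries R I I k ≤ comap I.incl (I.lcs L k) := by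
  induction k with
  | zero => simp
  | succ k ih =>
    rw [LieModule.lowerCentralSeries_succ, lcs_succ]
    calc ⁅(⊤ : LieIdeal R I), lowerCentralSeries R I I k⁆
        ≤ ⁅comap I.incl I, comap I.incl (I.lcs L k)⁆ :=
          LieSubmodule.mono_lie (comap_incl_self I).ge ih
      _ = comap I.incl ⁅I ⊓ I, I ⊓ I.lcs L k⁆ := comap_bracket_incl I
      _ ≤ comap I.incl ⁅I, I.lcs L k⁆ :=
          comap_mono (LieSubmodule.mono_lie inf_le_left inf_le_right)

theorem comap_lcs_succ_le_lowerCentralSeries (k : ℕ) :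
    comap I.incl (I.lcs L (k + 1)) ≤ lowerCentralSeries R I I k := by
  induction k with
  | zero => simp
  | succ k ih =>
    rw [lcs_succ I L (k + 1), LieModule.lowerCentralSeries_succ,
      ← comap_bracket_incl_of_le I le_rfl (lcs_succ_le_self I k), comap_incl_self]
    exact LieSubmodule.mono_lie le_rfl ih

theorem isNilpotent_iff_exists_lcs_eq_bot :
    LieRing.IsNilpotent I ↔ ∃ k, I.lcs L k = ⊥ := by
  rw [LieRing.IsNilpotent, isNilpotent_iff R]
  constructor
  · rintro ⟨k, hk⟩
    refine ⟨k + 1, ?_⟩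
    have := comap_lcs_succ_le_lowerCentralSeries I k
    rw [hk, le_bot_iff, comap_incl_eq_bot] at this
    exact this.symm.eq_bot_of_le (lcs_succ_le_self I k)
  · rintro ⟨k, hk⟩
    refine ⟨k, le_bot_iff.mp ((lowerCentralSeries_le_comap_lcs I k).trans_eq ?_)⟩
    rw [hk]
    exact ker_incl I

theorem lcs_sup_le : ∀ a b : ℕ, (I ⊔ J).lcs L (a + b) ≤ I.lcs L a ⊔ J.lcs L b
  | 0, _ => le_sup_of_le_left (by simp)
  | _, 0 => le_sup_of_le_right (by simp)
  | a + 1, b + 1 => by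
    rw [show a + 1 + (b + 1) = a + (b + 1) + 1 by omega, lcs_succ, LieSubmodule.sup_lie]
    refine sup_le ?_ ?_
    · calc ⁅I, (I ⊔ J).lcs L (a + (b + 1))⁆ ≤ ⁅I, I.lcs L a ⊔ J.lcs L (b + 1)⁆ :=
            LieSubmodule.mono_lie_right I (lcs_sup_le a (b + 1))
        _ ≤ I.lcs L (a + 1) ⊔ J.lcs L (b + 1) := by
            rw [LieSubmodule.lie_sup, lcs_succ I L a]
            exact sup_le_sup_left (LieSubmodule.lie_le_right _ _) _
    · calc ⁅J, (I ⊔ J).lcs L (a + (b + 1))⁆ = ⁅J, (I ⊔ J).lcs L (a + 1 + b)⁆ := by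
            rw [Nat.add_right_comm, Nat.add_assoc]
        _ ≤ ⁅J, I.lcs L (a + 1) ⊔ J.lcs L b⁆ :=
            LieSubmodule.mono_lie_right J (lcs_sup_le (a + 1) b)
        _ ≤ I.lcs L (a + 1) ⊔ J.lcs L (b + 1) := by
            rw [LieSubmodule.lie_sup, lcs_succ J L b]
            exact sup_le_sup_right (LieSubmodule.lie_le_right _ _) _
termination_by a b => a + b

theorem isNilpotent_sup (hI : LieRing.IsNilpotent I) (hJ : LieRing.IsNilpotent J) :
    LieRing.IsNilpotent (I ⊔ J : LieIdeal R L) := by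
  rw [isNilpotent_iff_exists_lcs_eq_bot] at hI hJ ⊢
  obtain ⟨a, ha⟩ := hI
  obtain ⟨b, hb⟩ := hJ
  exact ⟨a + b, le_bot_iff.mp ((lcs_sup_le I J a b).trans (by rw [ha, hb, sup_idem]))⟩

theorem lie_mem_lowerCentralSeries (k : ℕ) (x : L) {z : I}
    (hz : z ∈ lowerCentralSeries R I I k) : ⁅x, z⁆ ∈ lowerCentralSeries R I I k := by
  rw [← LieSubmodule.mem_toSubmodule, ← coe_lcs_eq] at hz ⊢
  exact (I.lcs I k).lie_mem hz

end LieIdeal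

theorem LieSubalgebra.lie_mem_lowerCentralSeries {R L : Type*} [CommRing R] [LieRing L]
    [LieAlgebra R L] (K : LieSubalgebra R L) (hK : ∀ x y : L, y ∈ K → ⁅x, y⁆ ∈ K)
    (k : ℕ) (x : L) {z : K} (hz : z ∈ lowerCentralSeries R K K k) :
    (⟨⁅x, (z : L)⁆, hK x z z.2⟩ : K) ∈ lowerCentralSeries R K K k := by
  obtain ⟨I, rfl⟩ := K.exists_lieIdeal_coe_eq_iff.mpr hK
  exact I.lie_mem_lowerCentralSeries k x (z := ⟨z.1, z.2⟩) hz

section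

variable {F}
variable {L : Type*} [LieRing L] [LieAlgebra F L]

theorem isNilpotent_nilrad [IsNoetherian F L] : LieRing.IsNilpotent (nilrad F L) :=
  CompleteLattice.WellFoundedGT.isSupClosedCompact (LieIdeal F L) inferInstance
    {I | LieRing.IsNilpotent I}
    ⟨⊥, show LieRing.IsNilpotent (⊥ : LieIdeal F L) from inferInstance⟩
    fun I hI J hJ ↦ LieIdeal.isNilpotent_sup I J hI hJ

theorem LieIdeal.isNilpotent_iff_le_nilrad [IsNoetherian F L] (I : LieIdeal F L) :
    LieRing.IsNilpotent I ↔ I ≤ nilrad F L := by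
  refine ⟨fun h ↦ le_sSup h, fun h ↦ ?_⟩
  have := isNilpotent_nilrad (F := F) (L := L)
  exact (LieIdeal.inclusion_injective h).lieAlgebra_isNilpotent

theorem LieSubalgebra.isNilpotent_iff_subset_nilrad [IsNoetherian F L] (K : LieSubalgebra F L)
    (hK : ∀ x y : L, y ∈ K → ⁅x, y⁆ ∈ K) :
    LieRing.IsNilpotent K ↔ (K : Set L) ⊆ nilrad F L := by
  obtain ⟨I, rfl⟩ := K.exists_lieIdeal_coe_eq_iff.mpr hK
  exact I.isNilpotent_iff_le_nilrad

theorem LieIdeal.isNilpotent_quotient_iff (I : LieIdeal F L) :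
    LieRing.IsNilpotent (L ⧸ I) ↔ ∃ k, lowerCentralSeries F L L k ≤ I := by
  rw [← LieModule.isNilpotent_quotient_iff, LieRing.IsNilpotent, isNilpotent_iff F,
    isNilpotent_iff F]
  simp only [← LieSubmodule.toSubmodule_inj, coe_lowerCentralSeries_ideal_quot_eq,
    LieSubmodule.bot_toSubmodule]

theorem nilResidual_eq_iInf_lowerCentralSeries :
    nilResidual F L = ⨅ k, lowerCentralSeries F L L k := by
  refine le_antisymm (le_iInf fun k ↦ sInf_le ?_) (le_sInf fun I hI ↦ ?_)
  · exact (LieIdeal.isNilpotent_quotient_iff _).mpr ⟨k, le_rfl⟩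
  · obtain ⟨k, hk⟩ := (LieIdeal.isNilpotent_quotient_iff I).mp hI
    exact iInf_le_of_le k hk

theorem nilResidual_le_iff [IsArtinian F L] (I : LieIdeal F L) :
    nilResidual F L ≤ I ↔ LieRing.IsNilpotent (L ⧸ I) := by
  refine ⟨fun h ↦ ?_, fun h ↦ sInf_le h⟩
  obtain ⟨k, hk⟩ := (eventually_iInf_lowerCentralSeries_eq F L L).exists
  rw [nilResidual_eq_iInf_lowerCentralSeries, hk] at h
  exact (LieIdeal.isNilpotent_quotient_iff I).mpr ⟨k, h⟩

theorem nilResidual_le_ker_iff [IsArtinian F L] {L' : Type*} [LieRing L'] [LieAlgebra F L']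
    (f : L →ₗ⁅F⁆ L') : nilResidual F L ≤ f.ker ↔ LieRing.IsNilpotent f.range :=
  (nilResidual_le_iff f.ker).trans f.quotKerEquivRange.nilpotent_iff_equiv_nilpotent

theorem mem_lowerNil_succ {n : ℕ} {y : L} :
    y ∈ lowerNil F L (n + 1) ↔ ∃ z ∈ nilResidual F (lowerNil F L n), (z : L) = y :=
  LieSubalgebra.mem_map _ _ _

theorem lowerNil_lie_mem (n : ℕ) (x : L) {y : L} (hy : y ∈ lowerNil F L n) :
    ⁅x, y⁆ ∈ lowerNil F L n := by
  induction n generalizing x y with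
  | zero => exact LieSubalgebra.mem_top _
  | succ n ih =>
    rw [mem_lowerNil_succ, nilResidual_eq_iInf_lowerCentralSeries] at hy ⊢
    obtain ⟨z, hz, rfl⟩ := hy
    refine ⟨⟨⁅x, (z : L)⁆, ih x z.2⟩, ?_, rfl⟩
    rw [LieSubmodule.mem_iInf] at hz ⊢
    exact fun k ↦ (lowerNil F L n).lie_mem_lowerCentralSeries (fun x _ ↦ ih x) k x (hz k)

theorem lowerNil_succ_subset_iff [FiniteDimensional F L] (n j : ℕ) :
    (lowerNil F L (n + 1) : Set L) ⊆ upperNil F L j ↔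
      (lowerNil F L n : Set L) ⊆ upperNil F L (j + 1) := by
  set K := lowerNil F L n
  set N := upperNil F L j
  let g := (lieQuotMk N).comp K.incl
  have hker : (lowerNil F L (n + 1) : Set L) ⊆ N ↔ nilResidual F K ≤ g.ker := by
    refine ⟨fun h z hz ↦ ?_, fun h y hy ↦ ?_⟩
    · exact (LieSubmodule.Quotient.mk_eq_zero N).mpr (h (mem_lowerNil_succ.mpr ⟨z, hz, rfl⟩))
    · obtain ⟨z, hz, rfl⟩ := mem_lowerNil_succ.mp hy
      exact (LieSubmodule.Quotient.mk_eq_zero N).mp (h hz)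
  have hrange : (K : Set L) ⊆ upperNil F L (j + 1) ↔
      (g.range : Set (L ⧸ N)) ⊆ nilrad F (L ⧸ N) := by
    refine ⟨?_, fun h y hy ↦ h ⟨⟨y, hy⟩, rfl⟩⟩
    rintro h - ⟨z, rfl⟩
    exact h z.2
  have hideal : ∀ x y : L ⧸ N, y ∈ g.range → ⁅x, y⁆ ∈ g.range := by
    rintro x - ⟨z, rfl⟩
    obtain ⟨a, rfl⟩ := LieSubmodule.Quotient.surjective_mk' N x
    exact ⟨⟨⁅a, z⁆, lowerNil_lie_mem n a z.2⟩, rfl⟩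
  rw [hker, nilResidual_le_ker_iff, LieSubalgebra.isNilpotent_iff_subset_nilrad _ hideal, hrange]

theorem lowerNil_add_subset_iff [FiniteDimensional F L] (n j k : ℕ) :
    (lowerNil F L (n + k) : Set L) ⊆ upperNil F L j ↔
      (lowerNil F L n : Set L) ⊆ upperNil F L (j + k) := by
  induction k generalizing j with
  | zero => rfl
  | succ k ih => rw [← add_assoc, lowerNil_succ_subset_iff, ih, Nat.add_right_comm, add_assoc]

theorem lowerNil_eq_bot_iff_upperNil_eq_top [FiniteDimensional F L] (n : ℕ) :
    lowerNil F L n = ⊥ ↔ upperNil F L n = ⊤ := by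
  have h := lowerNil_add_subset_iff (F := F) (L := L) 0 0 n
  simp only [zero_add, upperNil, lowerNil, LieSubmodule.bot_coe, LieSubalgebra.top_coe,
    Set.univ_subset_iff] at h
  rw [LieSubalgebra.eq_bot_iff, ← SetLike.coe_set_eq, LieSubmodule.top_coe]
  exact h

end

theorem stmt1_general {F L : Type*} [Field F] [LieRing L] [LieAlgebra F L]
    [FiniteDimensional F L] (r s : ℕ)
    (hr : upperNil F L r = ⊤) (hrmin : ∀ m < r, upperNil F L m ≠ ⊤)
    (hs : lowerNil F L s = ⊥) (hsmin : ∀ m < s, lowerNil F L m ≠ ⊥) :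
    r = s :=
  le_antisymm
    (not_lt.mp fun h ↦ hrmin s h ((lowerNil_eq_bot_iff_upperNil_eq_top s).mp hs))
    (not_lt.mp fun h ↦ hsmin r h ((lowerNil_eq_bot_iff_upperNil_eq_top r).mpr hr))

/-- The upper and lower nilpotent series of a finite-dimensional solvable Lie algebra
have the same length. -/
theorem stmt1 {F L : Type*} [Field F] [LieRing L] [LieAlgebra F L]
    [FiniteDimensional F L] [LieAlgebra.IsSolvable L] (r s : ℕ)
    (hr : upperNil F L r = ⊤) (hrmin : ∀ m < r, upperNil F L m ≠ ⊤)
    (hs : lowerNil F L s = ⊥) (hsmin : ∀ m < s, lowerNil F L m ≠ ⊥) :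
    r = s :=
  stmt1_general r s hr hrmin hs hsmin
end

section
/- For each k ≥ 1, the class of finite-dimensional solvable Lie algebras of nilpotent length at most k is saturated: if L is a finite-dimensional solvable Lie algebra with n(L/φ(L)) ≤ k, then n(L) ≤ k. -/
variable (F : Type*) [Field F]

/-!
A surjection `ν : L → L₂` whose kernel lies in `φ(L)` pulls nilpotent ideals back to nilpotent
ideals (Barnes): if `ad (ν x)` is nilpotent then `(ad x)ⁿ L ⊆ ker ν ⊆ φ(L)` for large `n`, so by
the Fitting decomposition the Engel subalgebra of `x` supplements `φ(L)`, hence is all of `L`, and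
`ad x` is nilpotent; Engel's theorem does the rest. This gives `N₁(L ⧸ φ) = N₁(L) ⧸ φ`. Once
`φ(L) ⊆ N₁(L)`, each `Nᵢ(L ⧸ φ)` is the image of `Nᵢ(L)`, inductively, because surjections carry
nilradicals into nilradicals.
-/

open LieAlgebra

section

variable {F}
variable {L L₂ : Type*} [LieRing L] [LieAlgebra F L] [LieRing L₂] [LieAlgebra F L₂]

lemma LieIdeal.isNilpotent_map_of_surjective {f : L →ₗ⁅F⁆ L₂} (hf : Function.Surjective f)
    (K : LieIdeal F L) [LieRing.IsNilpotent K] : LieRing.IsNilpotent (K.map f) := by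
  let g : K →ₗ⁅F⁆ K.map f :=
    { toFun := fun z => ⟨f z, LieIdeal.mem_map z.2⟩
      map_add' := fun _ _ => Subtype.ext (map_add f _ _)
      map_smul' := fun _ _ => Subtype.ext (map_smul f _ _)
      map_lie' := fun {_ _} => Subtype.ext (f.map_lie _ _) }
  refine Function.Surjective.lieAlgebra_isNilpotent (f := g) fun w => ?_
  obtain ⟨z, hz⟩ := LieIdeal.mem_map_of_surjective hf w.2
  exact ⟨z, Subtype.ext hz⟩

lemma map_nilrad_le_of_surjective {f : L →ₗ⁅F⁆ L₂} (hf : Function.Surjective f) :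
    (nilrad F L).map f ≤ nilrad F L₂ := by
  rw [nilrad, (LieIdeal.gc_map_comap f).l_sSup]
  exact iSup₂_le fun K (_ : LieRing.IsNilpotent K) => le_sSup (K.isNilpotent_map_of_surjective hf)

lemma comap_nilrad_le_of_forall {ν : L →ₗ⁅F⁆ L₂} (hν : Function.Surjective ν) {J : LieIdeal F L}
    (h : ∀ K : LieIdeal F L₂, LieRing.IsNilpotent K → K.comap ν ≤ J) :
    (nilrad F L₂).comap ν ≤ J := by
  have hker : ν.ker ≤ J := h ⊥ inferInstance
  have hcomap : (J.map ν).comap ν = J := by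
    rw [LieIdeal.comap_map_eq, sup_eq_left.mpr hker]
    rw [← LieSubmodule.coe_toSubmodule, LieIdeal.coe_map_of_surjective hν]
    rfl
  rw [← hcomap]
  refine LieIdeal.comap_mono (sSup_le fun K hK => ?_)
  calc K = (K.comap ν).map ν := by
        rw [LieIdeal.map_comap_eq (ν.isIdealMorphism_of_surjective hν),
          ν.idealRange_eq_top_of_surjective hν, top_inf_eq]
    _ ≤ J.map ν := LieIdeal.map_mono (h K hK)

lemma LieSubalgebra.eq_top_of_sup_lieFrattini_eq_top [FiniteDimensional F L] {H : LieSubalgebra F L}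
    (hH : H.toSubmodule ⊔ (lieFrattini F L).toSubmodule = ⊤) : H = ⊤ := by
  by_contra hne
  obtain ⟨M, hM, hHM⟩ := (eq_top_or_exists_le_coatom H).resolve_left hne
  have hφM : lieFrattini F L ≤ M := sInf_le (show IsMaxSub F M from hM)
  refine hM.1 (LieSubalgebra.toSubmodule_injective (top_unique ?_))
  rw [← hH]
  exact sup_le hHM hφM

lemma LieSubalgebra.isNilpotent_ad_of_engel_eq_top [FiniteDimensional F L] {x : L}
    (h : engel F x = ⊤) : IsNilpotent (ad F L x) := by
  refine ⟨Module.finrank F L, LinearMap.ker_eq_top.mp ?_⟩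
  have h' : (ad F L x).maxGenEigenspace 0 = ⊤ := congrArg LieSubalgebra.toSubmodule h
  rwa [Module.End.maxGenEigenspace_eq_genEigenspace_finrank, Module.End.genEigenspace_nat,
    zero_smul, sub_zero] at h'

lemma LieIdeal.isNilpotent_ad_of_mem {K : LieIdeal F L₂} [LieRing.IsNilpotent K]
    {y : L₂} (hy : y ∈ K) : IsNilpotent (ad F L₂ y) := by
  obtain ⟨m, hm⟩ := LieAlgebra.nilpotent_ad_of_nilpotent_algebra F K
  refine ⟨m + 1, LinearMap.ext fun z => ?_⟩
  have hz : ⁅y, z⁆ ∈ K := lie_mem_left F L₂ K y z hy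
  have := LieSubalgebra.coe_ad_pow F L₂ K.toLieSubalgebra ⟨y, hy⟩ ⟨_, hz⟩ m
  rw [show ad F K.toLieSubalgebra ⟨y, hy⟩ ^ m = 0 from hm ⟨y, hy⟩] at this
  rw [pow_succ, Module.End.mul_apply]
  simpa using this.symm

lemma isNilpotent_ad_of_isNilpotent_ad_map [FiniteDimensional F L] {ν : L →ₗ⁅F⁆ L₂}
    (hν : (ν.ker : Set L) ⊆ lieFrattini F L) {x : L} (hx : IsNilpotent (ad F L₂ (ν x))) :
    IsNilpotent (ad F L x) := by
  obtain ⟨m, hm⟩ := hx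
  have hcomm : (ad F L₂ (ν x)).comp (ν : L →ₗ[F] L₂) = (ν : L →ₗ[F] L₂).comp (ad F L x) :=
    LinearMap.ext fun y => (ν.map_lie x y).symm
  have range_le : ∀ n ≥ m,
      LinearMap.range (ad F L x ^ n) ≤ (lieFrattini F L).toSubmodule := by
    rintro n hn _ ⟨y, rfl⟩
    apply hν
    rw [SetLike.mem_coe, LieHom.mem_ker]
    have := LinearMap.congr_fun (Module.End.commute_pow_left_of_commute hcomm n) y
    simp only [LinearMap.comp_apply, LieHom.coe_toLinearMap] at this
    rw [← this, Module.End.pow_map_zero_of_le hn (by rw [hm]; rfl)]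
  obtain ⟨n, hfit, hn⟩ :=
    ((ad F L x).eventually_codisjoint_ker_pow_range_pow.and (Filter.eventually_ge_atTop m)).exists
  apply LieSubalgebra.isNilpotent_ad_of_engel_eq_top
  apply LieSubalgebra.eq_top_of_sup_lieFrattini_eq_top
  refine top_unique (hfit.eq_top ▸ sup_le_sup (fun y hy => ?_) (range_le n hn))
  exact (LieSubalgebra.mem_engel_iff F x y).mpr ⟨n, hy⟩

lemma LieIdeal.isNilpotent_comap_of_ker_subset_lieFrattini [FiniteDimensional F L]
    {ν : L →ₗ⁅F⁆ L₂} (hν : (ν.ker : Set L) ⊆ lieFrattini F L) (K : LieIdeal F L₂)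
    [LieRing.IsNilpotent K] :
    LieRing.IsNilpotent (K.comap ν) := by
  rw [LieAlgebra.isNilpotent_iff_forall (R := F)]
  intro z
  exact (K.comap ν).toLieSubalgebra.isNilpotent_ad_of_isNilpotent_ad (x := z)
    (isNilpotent_ad_of_isNilpotent_ad_map hν
      (LieIdeal.isNilpotent_ad_of_mem (LieIdeal.mem_comap.mp z.2)))

lemma comap_nilrad_le_nilrad [FiniteDimensional F L] {ν : L →ₗ⁅F⁆ L₂}
    (hsurj : Function.Surjective ν) (hν : (ν.ker : Set L) ⊆ lieFrattini F L) :
    (nilrad F L₂).comap ν ≤ nilrad F L :=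
  comap_nilrad_le_of_forall hsurj fun K (_ : LieRing.IsNilpotent K) =>
    le_sSup (K.isNilpotent_comap_of_ker_subset_lieFrattini hν)

lemma lieQuotMk_surjective (J : LieIdeal F L) : Function.Surjective (lieQuotMk J) :=
  LieSubmodule.Quotient.surjective_mk' J

lemma lieQuotMk_eq_zero_iff {J : LieIdeal F L} {x : L} : lieQuotMk J x = 0 ↔ x ∈ J :=
  LieSubmodule.Quotient.mk_eq_zero'

def lieQuotLift (J : LieIdeal F L) (f : L →ₗ⁅F⁆ L₂) (h : J ≤ f.ker) : L ⧸ J →ₗ⁅F⁆ L₂ where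
  toLinearMap := J.toSubmodule.liftQ f fun x hx => LieHom.mem_ker.mp (h hx)
  map_lie' := by
    rintro ⟨x⟩ ⟨y⟩
    exact f.map_lie x y

lemma lieQuotLift_lieQuotMk (J : LieIdeal F L) (f : L →ₗ⁅F⁆ L₂) (h : J ≤ f.ker) (x : L) :
    lieQuotLift J f h (lieQuotMk J x) = f x :=
  rfl

lemma lieQuotLift_surjective (J : LieIdeal F L) {f : L →ₗ⁅F⁆ L₂} (hf : Function.Surjective f)
    (h : J ≤ f.ker) : Function.Surjective (lieQuotLift J f h) := fun z => by
  obtain ⟨x, rfl⟩ := hf z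
  exact ⟨lieQuotMk J x, rfl⟩

lemma comap_upperNil_one_le [FiniteDimensional F L] (I : LieIdeal F L)
    (hI : (I : Set L) ⊆ lieFrattini F L) :
    (upperNil F (L ⧸ I) 1).comap (lieQuotMk I) ≤ upperNil F L 1 := by
  -- `upperNil F _ 0 = ⊥`, so `ν` has kernel `I`.
  set ν := (lieQuotMk (upperNil F (L ⧸ I) 0)).comp (lieQuotMk I)
  have hker : (ν.ker : Set L) ⊆ lieFrattini F L := fun y hy => by
    have h0 : lieQuotMk I y ∈ (⊥ : LieIdeal F (L ⧸ I)) :=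
      lieQuotMk_eq_zero_iff.mp (LieHom.mem_ker.mp hy)
    exact hI (lieQuotMk_eq_zero_iff.mp ((LieSubmodule.mem_bot _).mp h0))
  have hν : Function.Surjective ν :=
    (lieQuotMk_surjective _).comp (lieQuotMk_surjective I)
  intro x hx
  exact map_nilrad_le_of_surjective (lieQuotMk_surjective _)
    (LieIdeal.mem_map (comap_nilrad_le_nilrad hν hker hx))

lemma comap_upperNil_succ_le (I : LieIdeal F L) {n : ℕ}
    (h : (upperNil F (L ⧸ I) n).comap (lieQuotMk I) ≤ upperNil F L n) :
    (upperNil F (L ⧸ I) (n + 1)).comap (lieQuotMk I) ≤ upperNil F L (n + 1) := by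
  have hI : I ≤ (lieQuotMk (upperNil F L n)).ker := fun y hy => by
    refine LieHom.mem_ker.mpr (lieQuotMk_eq_zero_iff.mpr (h ?_))
    rw [LieIdeal.mem_comap, lieQuotMk_eq_zero_iff.mpr hy]
    exact zero_mem _
  let σ := lieQuotLift I (lieQuotMk (upperNil F L n)) hI
  have hN : upperNil F (L ⧸ I) n ≤ σ.ker := by
    intro z hz
    obtain ⟨y, rfl⟩ := lieQuotMk_surjective I z
    rw [LieHom.mem_ker, lieQuotLift_lieQuotMk]
    exact lieQuotMk_eq_zero_iff.mpr (h hz)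
  let ρ := lieQuotLift _ σ hN
  have hρ : Function.Surjective ρ :=
    lieQuotLift_surjective _ (lieQuotLift_surjective I (lieQuotMk_surjective _) hI) hN
  intro x hx
  rw [LieIdeal.mem_comap, upperNil, LieIdeal.mem_comap] at hx
  rw [upperNil, LieIdeal.mem_comap, ← lieQuotLift_lieQuotMk I _ hI,
    ← lieQuotLift_lieQuotMk _ σ hN]
  exact map_nilrad_le_of_surjective hρ (LieIdeal.mem_map hx)

end

theorem stmt12_general {F L : Type*} [Field F] [LieRing L] [LieAlgebra F L]
    [FiniteDimensional F L]
    (k : ℕ) (hk : 1 ≤ k) (I : LieIdeal F L) (hI : (I : Set L) = (lieFrattini F L : Set L))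
    (h : upperNil F (L ⧸ I) k = ⊤) :
    upperNil F L k = ⊤ := by
  have key : ∀ n ≥ 1, (upperNil F (L ⧸ I) n).comap (lieQuotMk I) ≤ upperNil F L n :=
    Nat.le_induction (comap_upperNil_one_le I hI.subset) fun _ _ => comap_upperNil_succ_le I
  refine eq_top_iff.mpr fun x _ => key k hk ?_
  rw [LieIdeal.mem_comap, h]
  exact LieSubmodule.mem_top _

/-- The class of solvable Lie algebras of nilpotent length `≤ k` is saturated:
if `n(L ⧸ φ(L)) ≤ k` then `n(L) ≤ k`. -/
theorem stmt12 {F L : Type*} [Field F] [LieRing L] [LieAlgebra F L]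
    [FiniteDimensional F L] [LieAlgebra.IsSolvable L]
    (k : ℕ) (hk : 1 ≤ k) (I : LieIdeal F L) (hI : (I : Set L) = (lieFrattini F L : Set L))
    (h : upperNil F (L ⧸ I) k = ⊤) :
    upperNil F L k = ⊤ :=
  stmt12_general k hk I hI h
end
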